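/- Let U be a complex Banach space, let ι : U →L L²(μ, ℂ) be a compact operator, let R > 0 and J ≥ 1. Then the set of all kernels (1/J) Σ_{j=1}^{J} (ι w_j) ⊗ conj(ι w_j), viewed as elements of L²(μ × μ, ℂ), where (w₁, …, w_J) ranges over all families in U with ‖w_j‖_U ≤ R for every j, is totally bounded in L²(μ × μ, ℂ). (Hence the parameter-to-covariance forward map of passive imaging maps bounded parameter sets to relatively compact sets and the inverse problem is ill-posed.) -/

import Mathlib

/-!
The kernel map `(f, g) ↦ f ⊗ ḡ` is real-bilinear with `‖f ⊗ ḡ‖ = ‖f‖ ‖g‖` (Tonelli), hence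
continuous, and so is the averaged covariance `v ↦ (1/J) Σ_j v_j ⊗ v̄_j` of a family in `L²`.
A compact operator maps the `R`-ball into a compact set `K`; the covariance kernels of bounded
families therefore lie in the continuous image of the compact product `K^J`.
-/

open MeasureTheory ComplexConjugate
open scoped ENNReal

namespace MeasureTheory

section TensorKernel

variable {𝕜 : Type*} [RCLike 𝕜] {α β : Type*} [MeasurableSpace α] [MeasurableSpace β]
  {μ : Measure α} {ν : Measure β} [SFinite ν]

theorem eLpNorm_mul_conj_prod {f : α → 𝕜} {g : β → 𝕜}
    (hf : AEStronglyMeasurable f μ) (hg : AEStronglyMeasurable g ν) {p : ℝ≥0∞}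
    (hp0 : p ≠ 0) (hp : p ≠ ∞) :
    eLpNorm (fun z : α × β => f z.1 * conj (g z.2)) p (μ.prod ν)
      = eLpNorm f p μ * eLpNorm g p ν := by
  simp only [eLpNorm_eq_lintegral_rpow_enorm_toReal hp0 hp, enorm_mul, RCLike.enorm_conj,
    ENNReal.mul_rpow_of_nonneg _ _ ENNReal.toReal_nonneg]
  rw [lintegral_prod_mul (hf.enorm.pow_const _) (hg.enorm.pow_const _),
    ENNReal.mul_rpow_of_nonneg _ _ (by positivity)]

theorem MemLp.mul_conj_prod {f : α → 𝕜} {g : β → 𝕜} {p : ℝ≥0∞}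
    (hf : MemLp f p μ) (hg : MemLp g p ν) (hp0 : p ≠ 0) (hp : p ≠ ∞) :
    MemLp (fun z : α × β => f z.1 * conj (g z.2)) p (μ.prod ν) := by
  refine ⟨(hf.1.comp_quasiMeasurePreserving Measure.quasiMeasurePreserving_fst).mul
    (hg.1.comp_quasiMeasurePreserving Measure.quasiMeasurePreserving_snd).star, ?_⟩
  rw [eLpNorm_mul_conj_prod hf.1 hg.1 hp0 hp]
  exact ENNReal.mul_lt_top hf.2 hg.2

noncomputable def tensorKernel (f : Lp 𝕜 2 μ) (g : Lp 𝕜 2 ν) : Lp 𝕜 2 (μ.prod ν) :=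
  ((Lp.memLp f).mul_conj_prod (Lp.memLp g) two_ne_zero ENNReal.ofNat_ne_top).toLp _

theorem coeFn_tensorKernel (f : Lp 𝕜 2 μ) (g : Lp 𝕜 2 ν) :
    tensorKernel f g =ᵐ[μ.prod ν] fun z => f z.1 * conj (g z.2) :=
  MemLp.coeFn_toLp _

theorem norm_tensorKernel (f : Lp 𝕜 2 μ) (g : Lp 𝕜 2 ν) :
    ‖tensorKernel f g‖ = ‖f‖ * ‖g‖ := by
  rw [tensorKernel, Lp.norm_toLp, eLpNorm_mul_conj_prod (Lp.aestronglyMeasurable f)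
    (Lp.aestronglyMeasurable g) two_ne_zero ENNReal.ofNat_ne_top, ENNReal.toReal_mul,
    Lp.norm_def, Lp.norm_def]

theorem tensorKernel_add_left (f f' : Lp 𝕜 2 μ) (g : Lp 𝕜 2 ν) :
    tensorKernel (f + f') g = tensorKernel f g + tensorKernel f' g := by
  refine Lp.ext ?_
  filter_upwards [coeFn_tensorKernel (f + f') g, coeFn_tensorKernel f g,
    coeFn_tensorKernel f' g, Lp.coeFn_add (tensorKernel f g) (tensorKernel f' g),
    Measure.quasiMeasurePreserving_fst.ae (Lp.coeFn_add f f')] with z h h₁ h₂ hsum hadd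
  rw [h, hsum, Pi.add_apply, h₁, h₂, hadd, Pi.add_apply, add_mul]

theorem tensorKernel_add_right (f : Lp 𝕜 2 μ) (g g' : Lp 𝕜 2 ν) :
    tensorKernel f (g + g') = tensorKernel f g + tensorKernel f g' := by
  refine Lp.ext ?_
  filter_upwards [coeFn_tensorKernel f (g + g'), coeFn_tensorKernel f g,
    coeFn_tensorKernel f g', Lp.coeFn_add (tensorKernel f g) (tensorKernel f g'),
    Measure.quasiMeasurePreserving_snd.ae (Lp.coeFn_add g g')] with z h h₁ h₂ hsum hadd
  rw [h, hsum, Pi.add_apply, h₁, h₂, hadd, Pi.add_apply, map_add, mul_add]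

theorem tensorKernel_smul_left (c : 𝕜) (f : Lp 𝕜 2 μ) (g : Lp 𝕜 2 ν) :
    tensorKernel (c • f) g = c • tensorKernel f g := by
  refine Lp.ext ?_
  filter_upwards [coeFn_tensorKernel (c • f) g, coeFn_tensorKernel f g,
    Lp.coeFn_smul c (tensorKernel f g),
    Measure.quasiMeasurePreserving_fst.ae (Lp.coeFn_smul c f)] with z h h₁ hsmul hf
  rw [h, hsmul, Pi.smul_apply, h₁, hf, Pi.smul_apply, smul_mul_assoc]

theorem tensorKernel_smul_right (c : 𝕜) (f : Lp 𝕜 2 μ) (g : Lp 𝕜 2 ν) :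
    tensorKernel f (c • g) = conj c • tensorKernel f g := by
  refine Lp.ext ?_
  filter_upwards [coeFn_tensorKernel f (c • g), coeFn_tensorKernel f g,
    Lp.coeFn_smul (conj c) (tensorKernel f g),
    Measure.quasiMeasurePreserving_snd.ae (Lp.coeFn_smul c g)] with z h h₁ hsmul hg
  rw [h, hsmul, Pi.smul_apply, h₁, hg, Pi.smul_apply, smul_eq_mul, smul_eq_mul, map_mul,
    mul_left_comm]

noncomputable def tensorKernelCLM : Lp 𝕜 2 μ →L[ℝ] Lp 𝕜 2 ν →L[ℝ] Lp 𝕜 2 (μ.prod ν) :=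
  LinearMap.mkContinuous₂
    (LinearMap.mk₂ ℝ tensorKernel tensorKernel_add_left
      (fun c f g => by simpa using tensorKernel_smul_left (μ := μ) (ν := ν) (c : 𝕜) f g)
      tensorKernel_add_right
      (fun c f g => by simpa using tensorKernel_smul_right (μ := μ) (ν := ν) (c : 𝕜) f g))
    1 (fun f g => by rw [LinearMap.mk₂_apply, norm_tensorKernel, one_mul])

@[fun_prop]
theorem Continuous.tensorKernel {X : Type*} [TopologicalSpace X] {f : X → Lp 𝕜 2 μ}
    {g : X → Lp 𝕜 2 ν} (hf : Continuous f) (hg : Continuous g) :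
    Continuous fun x => tensorKernel (f x) (g x) :=
  (tensorKernelCLM (𝕜 := 𝕜) (μ := μ) (ν := ν)).continuous₂.comp₂ hf hg

end TensorKernel

section Covariance

variable {𝕜 : Type*} [RCLike 𝕜] {α : Type*} [MeasurableSpace α] {μ : Measure α} [SFinite μ]
  {ι : Type*} [Fintype ι]

noncomputable def empiricalCovariance (v : ι → Lp 𝕜 2 μ) : Lp 𝕜 2 (μ.prod μ) :=
  (Fintype.card ι : 𝕜)⁻¹ • ∑ j, tensorKernel (v j) (v j)

theorem coeFn_empiricalCovariance (v : ι → Lp 𝕜 2 μ) :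
    empiricalCovariance v =ᵐ[μ.prod μ]
      fun z => (Fintype.card ι : 𝕜)⁻¹ * ∑ j, v j z.1 * conj (v j z.2) := by
  filter_upwards [Lp.coeFn_smul (Fintype.card ι : 𝕜)⁻¹ (∑ j, tensorKernel (v j) (v j)),
    Lp.coeFn_fun_finsetSum Finset.univ fun j => tensorKernel (v j) (v j),
    ae_all_iff.2 fun j => coeFn_tensorKernel (v j) (v j)] with z hsmul hsum hker
  rw [empiricalCovariance, hsmul, Pi.smul_apply, hsum, smul_eq_mul]
  simp only [hker]

theorem continuous_empiricalCovariance :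
    Continuous (empiricalCovariance : (ι → Lp 𝕜 2 μ) → Lp 𝕜 2 (μ.prod μ)) := by
  show Continuous fun v : ι → Lp 𝕜 2 μ => (Fintype.card ι : 𝕜)⁻¹ • ∑ j, tensorKernel (v j) (v j)
  fun_prop

end Covariance

end MeasureTheory

theorem IsCompactOperator.totallyBounded_image_comp_pi_closedBall
    {𝕜 : Type*} [NontriviallyNormedField 𝕜] {E F X : Type*}
    [SeminormedAddCommGroup E] [NormedSpace 𝕜 E] [SeminormedAddCommGroup F] [NormedSpace 𝕜 F]
    [UniformSpace X] {ι : Type*}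
    {T : E →L[𝕜] F} (hT : IsCompactOperator T) {Φ : (ι → F) → X} (hΦ : Continuous Φ)
    (R : ℝ) : TotallyBounded ((fun w => Φ (T ∘ w)) '' {w | ∀ j, ‖w j‖ ≤ R}) := by
  obtain ⟨K, hK, hTK⟩ := IsCompactOperator.image_closedBall_subset_compact
    (f := (T : E →ₗ[𝕜] F)) hT R
  refine ((isCompact_univ_pi fun _ => hK).image hΦ).totallyBounded.subset ?_
  rintro _ ⟨w, hw, rfl⟩
  exact ⟨T ∘ w, fun j _ => hTK ⟨w j, by simpa using hw j, rfl⟩, rfl⟩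

theorem statement11_general
    {Ω : Type*} [MeasurableSpace Ω] (μ : Measure Ω) [SigmaFinite μ]
    {U : Type*} [NormedAddCommGroup U] [NormedSpace ℂ U]
    (ι : U →L[ℂ] Lp ℂ 2 μ) (hι : IsCompactOperator ι)
    (R : ℝ) (J : ℕ) :
    TotallyBounded { g : Lp ℂ 2 (μ.prod μ) |
      ∃ w : Fin J → U, (∀ j, ‖w j‖ ≤ R) ∧
        ∀ᵐ p ∂(μ.prod μ),
          g p = (1 / (J : ℂ)) * ∑ j, ι (w j) p.1 * conj (ι (w j) p.2) } := by
  refine (hι.totallyBounded_image_comp_pi_closedBall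
    (continuous_empiricalCovariance (ι := Fin J)) R).subset ?_
  rintro g ⟨w, hw, hg⟩
  refine ⟨w, hw, Lp.ext ?_⟩
  filter_upwards [coeFn_empiricalCovariance (ι ∘ w), hg] with z hcov hgz
  simp [hcov, hgz]

/-- compactness (total boundedness of bounded images) of the
covariance forward map induced by a compact observation operator `ι`. -/
theorem statement11
    {Ω : Type*} [MeasurableSpace Ω] (μ : Measure Ω) [SigmaFinite μ]
    {U : Type*} [NormedAddCommGroup U] [NormedSpace ℂ U]
    (ι : U →L[ℂ] Lp ℂ 2 μ) (hι : IsCompactOperator ι)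
    (R : ℝ) (hR : 0 < R) (J : ℕ) (hJ : 1 ≤ J) :
    TotallyBounded { g : Lp ℂ 2 (μ.prod μ) |
      ∃ w : Fin J → U, (∀ j, ‖w j‖ ≤ R) ∧
        ∀ᵐ p ∂(μ.prod μ),
          g p = (1 / (J : ℂ)) * ∑ j, ι (w j) p.1 * conj (ι (w j) p.2) } :=
  statement11_general μ ι hι R J
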